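/- Let G be an (n, d, λ)-graph with λ < d/50, and let U be a subset of the vertices of G of even size such that the induced subgraph G[U] has minimum degree at least 9d/10. Then G[U] contains a perfect matching. -/

import Mathlib

open SimpleGraph

/-- The adjacency matrix of a simple graph over `ℝ` is Hermitian. -/
theorem adjMatrix_isHermitian {n : ℕ} (G : SimpleGraph (Fin n)) [DecidableRel G.Adj] :
    (G.adjMatrix ℝ).IsHermitian :=
  Matrix.IsHermitian.ext fun i j => by
    simp [SimpleGraph.adjMatrix_apply, SimpleGraph.adj_comm]

/-- The eigenvalues of the adjacency matrix of `G`. -/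
noncomputable def adjEigenvalues {n : ℕ} (G : SimpleGraph (Fin n)) [DecidableRel G.Adj] :
    Fin n → ℝ :=
  (adjMatrix_isHermitian G).eigenvalues

/-- `G` is an `(n, d, λ)`-graph: a `d`-regular graph on `n` vertices all of whose
eigenvalues, except the largest one, are at most `lam` in absolute value. -/
def IsNDLGraph {n : ℕ} (G : SimpleGraph (Fin n)) [DecidableRel G.Adj] (d : ℕ) (lam : ℝ) : Prop :=
  G.IsRegularOfDegree d ∧
  ∃ i₀ : Fin n, ∀ i : Fin n, i ≠ i₀ → |adjEigenvalues G i| ≤ lam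

/-!
The expander mixing lemma `|e(S, T) - d |S| |T| / n| ≤ λ √(|S| |T|)` comes from expanding the
centred indicator vectors of `S` and `T` in an orthonormal eigenbasis of the adjacency matrix:
since `λ < d`, the all-ones vector is orthogonal to every eigenvector but one, so centred vectors
only meet eigenvalues of absolute value at most `λ`.

With minimum degree `9d/10` inside `U`, mixing forces `|U| > 22n/25`. Split `U` into halves
`X, Y` of size `m > 11n/25` maximising the number of edges between them. Exchanging `v ∈ X` and
`w ∈ Y` cannot increase this cut, so if `v` had fewer than `d/5` neighbours in `Y`, every vertex
of `Y` would have fewer than `d/4` neighbours in `Y`, which is too sparse for a set of size `m`.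
So each side sends at least `d/5` edges from every vertex to the other. Hall's condition follows:
if `A ⊆ X` had `|N(A) ∩ Y| < |A|`, then `B = Y \ N(A)` would violate it from the other side; by
mixing both `A` and `B` have more than `9n/50` vertices, yet no edges join them, which mixing
forbids.
-/

open Finset Matrix WithLp
open scoped RealInnerProductSpace

namespace OrthonormalBasis

variable {ι E : Type*} [Fintype ι] [NormedAddCommGroup E] [InnerProductSpace ℝ E]

lemma inner_eq_zero_of_inner_eq_zero (b : OrthonormalBasis ι ℝ E) {i₀ : ι} {v x : E}
    (hv : v ≠ 0) (hvb : ∀ i ≠ i₀, ⟪b i, v⟫ = 0) (hx : ⟪v, x⟫ = 0) : ⟪b i₀, x⟫ = 0 := by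
  have expand (y : E) : ⟪v, y⟫ = ⟪v, b i₀⟫ * ⟪b i₀, y⟫ := by
    rw [← b.sum_inner_mul_inner, Finset.sum_eq_single i₀ (fun i _ hi => by
      rw [real_inner_comm, hvb i hi, zero_mul]) (by simp)]
  have hvb₀ : ⟪v, b i₀⟫ ≠ 0 := by
    intro h
    apply hv
    rw [← inner_self_eq_zero (𝕜 := ℝ), expand, h, zero_mul]
  rw [expand, mul_eq_zero] at hx
  exact hx.resolve_left hvb₀

end OrthonormalBasis

namespace Matrix.IsHermitian

variable {ι : Type*} [Fintype ι] [DecidableEq ι] {A : Matrix ι ι ℝ} (hA : A.IsHermitian)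

lemma toEuclideanLin_eigenvectorBasis (i : ι) :
    toEuclideanLin A (hA.eigenvectorBasis i) = hA.eigenvalues i • hA.eigenvectorBasis i :=
  ofLp_injective 2 (hA.mulVec_eigenvectorBasis i)

lemma inner_eigenvectorBasis_toEuclideanLin (i : ι) (y : EuclideanSpace ℝ ι) :
    ⟪hA.eigenvectorBasis i, toEuclideanLin A y⟫ =
      hA.eigenvalues i * ⟪hA.eigenvectorBasis i, y⟫ := by
  rw [← isSymmetric_toEuclideanLin_iff.mpr hA, toEuclideanLin_eigenvectorBasis,
    real_inner_smul_left]

lemma inner_eigenvectorBasis_eq_zero {μ : ℝ} {v : EuclideanSpace ℝ ι}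
    (hv : toEuclideanLin A v = μ • v) {i : ι} (hi : hA.eigenvalues i ≠ μ) :
    ⟪hA.eigenvectorBasis i, v⟫ = 0 := by
  have h := hA.inner_eigenvectorBasis_toEuclideanLin i v
  rw [hv, real_inner_smul_right] at h
  exact (mul_eq_mul_right_iff.mp h).resolve_left hi.symm

theorem abs_inner_toEuclideanLin_le {lam : ℝ} (hlam : 0 ≤ lam) {i₀ : ι}
    (hei : ∀ i ≠ i₀, |hA.eigenvalues i| ≤ lam) {x : EuclideanSpace ℝ ι}
    (hx : ⟪hA.eigenvectorBasis i₀, x⟫ = 0) (y : EuclideanSpace ℝ ι) :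
    |⟪x, toEuclideanLin A y⟫| ≤ lam * (‖x‖ * ‖y‖) := by
  set b := hA.eigenvectorBasis
  have expand : ⟪x, toEuclideanLin A y⟫ = ∑ i, hA.eigenvalues i * (⟪b i, x⟫ * ⟪b i, y⟫) := by
    rw [← b.sum_inner_mul_inner]
    refine sum_congr rfl fun i _ => ?_
    rw [hA.inner_eigenvectorBasis_toEuclideanLin, real_inner_comm]
    ring
  have termwise (i : ι) :
      |hA.eigenvalues i * (⟪b i, x⟫ * ⟪b i, y⟫)| ≤ lam * (|⟪b i, x⟫| * |⟪b i, y⟫|) := by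
    rw [abs_mul, abs_mul]
    rcases eq_or_ne i i₀ with rfl | hi
    · simp [b, hx]
    · gcongr
      exact hei i hi
  have parseval (z : EuclideanSpace ℝ ι) : √(∑ i, |⟪b i, z⟫| ^ 2) = ‖z‖ := by
    simp_rw [sq_abs, b.sum_sq_inner_right, Real.sqrt_sq (norm_nonneg z)]
  calc |⟪x, toEuclideanLin A y⟫|
      ≤ ∑ i, lam * (|⟪b i, x⟫| * |⟪b i, y⟫|) := by
        rw [expand]
        exact (abs_sum_le_sum_abs _ _).trans (sum_le_sum fun i _ => termwise i)
    _ ≤ lam * (‖x‖ * ‖y‖) := by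
        rw [← mul_sum, ← parseval x, ← parseval y]
        gcongr
        exact Real.sum_mul_le_sqrt_mul_sqrt _ _ _

end Matrix.IsHermitian

namespace EuclideanSpace

variable {V : Type*} [Fintype V]

noncomputable def centeredIndicator (s : Finset V) : EuclideanSpace ℝ V :=
  toLp 2 ((s : Set V).indicator 1) - ((#s : ℝ) / Fintype.card V) • toLp 2 1

lemma inner_one_one : ⟪toLp 2 (1 : V → ℝ), toLp 2 1⟫ = Fintype.card V := by
  rw [inner_toLp_toLp]
  simp

lemma inner_one_indicator (s : Finset V) :
    ⟪toLp 2 (1 : V → ℝ), toLp 2 ((s : Set V).indicator 1)⟫ = #s := by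
  classical
  simp [inner_toLp_toLp, dotProduct, Set.indicator_apply]

lemma inner_indicator_self (s : Finset V) :
    ⟪toLp 2 ((s : Set V).indicator (1 : V → ℝ)), toLp 2 ((s : Set V).indicator 1)⟫ = #s := by
  classical
  rw [inner_toLp_toLp]
  simp [dotProduct, Set.indicator_apply]

variable [Nonempty V]

lemma inner_one_centeredIndicator (s : Finset V) :
    ⟪toLp 2 (1 : V → ℝ), centeredIndicator s⟫ = 0 := by
  rw [centeredIndicator, inner_sub_right, real_inner_smul_right, inner_one_indicator, inner_one_one,
    div_mul_cancel₀ _ (by positivity), sub_self]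

lemma norm_centeredIndicator_le (s : Finset V) : ‖centeredIndicator s‖ ≤ √(#s : ℝ) := by
  have hcard : (Fintype.card V : ℝ) ≠ 0 := by positivity
  have hnorm : ‖centeredIndicator s‖ ^ 2 = #s - (#s : ℝ) ^ 2 / Fintype.card V := by
    rw [← real_inner_self_eq_norm_sq]
    simp only [centeredIndicator, inner_sub_left, inner_sub_right, real_inner_smul_left,
      real_inner_smul_right, inner_indicator_self, inner_one_indicator,
      real_inner_comm (toLp 2 (1 : V → ℝ)), inner_one_one]
    field_simp
    ring
  refine Real.le_sqrt_of_sq_le ?_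
  rw [hnorm]
  linarith [show 0 ≤ (#s : ℝ) ^ 2 / Fintype.card V by positivity]

end EuclideanSpace

namespace SimpleGraph

open EuclideanSpace

variable {V : Type*} [Fintype V] [DecidableEq V] (G : SimpleGraph V) [DecidableRel G.Adj]

lemma card_interedges_eq_sum (s t : Finset V) :
    #(G.interedges s t) = ∑ v ∈ s, #(G.neighborFinset v ∩ t) := by
  rw [interedges_def, card_filter, sum_product]
  refine sum_congr rfl fun v _ => ?_
  rw [← card_filter]
  congr 1
  ext w
  simp [and_comm]

lemma mul_card_le_card_interedges {s t : Finset V} {δ : ℝ}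
    (h : ∀ v ∈ s, δ ≤ #(G.neighborFinset v ∩ t)) : δ * #s ≤ #(G.interedges s t) := by
  rw [card_interedges_eq_sum, Nat.cast_sum, mul_comm, ← nsmul_eq_mul, ← sum_const]
  exact sum_le_sum h

lemma card_interedges_le_mul_card {s t : Finset V} {δ : ℝ}
    (h : ∀ v ∈ s, #(G.neighborFinset v ∩ t) ≤ δ) : #(G.interedges s t) ≤ δ * #s := by
  rw [card_interedges_eq_sum, Nat.cast_sum, mul_comm, ← nsmul_eq_mul, ← sum_const]
  exact sum_le_sum h

lemma inner_indicator_toEuclideanLin_adjMatrix (s t : Finset V) :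
    ⟪toLp 2 ((s : Set V).indicator 1),
      toEuclideanLin (G.adjMatrix ℝ) (toLp 2 ((t : Set V).indicator 1))⟫ = #(G.interedges s t) := by
  rw [toLpLin_toLp, inner_toLp_toLp, star_trivial, dotProduct_comm, toLin'_apply,
    dotProduct_mulVec_adjMatrix, interedges_def, natCast_card_filter, sum_product]
  simp only [Set.indicator_apply, mem_coe, Pi.one_apply]
  simp [← sum_filter, inter_comm, inter_filter]

lemma toEuclideanLin_adjMatrix_one {d : ℕ} (hG : G.IsRegularOfDegree d) :
    toEuclideanLin (G.adjMatrix ℝ) (toLp 2 1) = (d : ℝ) • toLp 2 1 := by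
  ext v
  simp [hG v]

lemma inner_centeredIndicator_toEuclideanLin_adjMatrix [Nonempty V] {d : ℕ}
    (hG : G.IsRegularOfDegree d) (s t : Finset V) :
    ⟪centeredIndicator s, toEuclideanLin (G.adjMatrix ℝ) (centeredIndicator t)⟫ =
      #(G.interedges s t) - (d : ℝ) * (#s : ℝ) * (#t : ℝ) / Fintype.card V := by
  have hone_left : ⟪toLp 2 1, toEuclideanLin (G.adjMatrix ℝ) (toLp 2 ((t : Set V).indicator 1))⟫
      = d * #t := by
    rw [← isSymmetric_toEuclideanLin_iff.mpr (G.isHermitian_adjMatrix ℝ),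
      toEuclideanLin_adjMatrix_one G hG, real_inner_smul_left, inner_one_indicator]
  have hcard : (Fintype.card V : ℝ) ≠ 0 := by positivity
  simp only [centeredIndicator, map_sub, map_smul, toEuclideanLin_adjMatrix_one G hG,
    inner_sub_left, inner_sub_right, real_inner_smul_left, real_inner_smul_right,
    inner_indicator_toEuclideanLin_adjMatrix, hone_left, real_inner_comm (toLp 2 (1 : V → ℝ)),
    inner_one_indicator, inner_one_one]
  field_simp
  ring

lemma card_neighborFinset_inter_insert {v w : V} {t : Finset V} (hw : w ∉ t) :
    #(G.neighborFinset v ∩ insert w t) =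
      #(G.neighborFinset v ∩ t) + if G.Adj v w then 1 else 0 := by
  by_cases h : G.Adj v w
  · rw [inter_insert_of_mem ((G.mem_neighborFinset v w).mpr h),
      card_insert_of_notMem fun hw' => hw (mem_inter.mp hw').2, if_pos h]
  · rw [inter_insert_of_notMem (by simpa using h), if_neg h, add_zero]

lemma card_interedges_insert_insert {s t : Finset V} {v w : V} (hv : v ∉ s) (hw : w ∉ t) :
    #(G.interedges (insert v s) (insert w t)) = #(G.interedges s t) + #(G.neighborFinset v ∩ t)
      + #(G.neighborFinset w ∩ s) + if G.Adj v w then 1 else 0 := by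
  have hsw : ∑ x ∈ s, #(G.neighborFinset x ∩ insert w t)
      = #(G.interedges s t) + #(G.neighborFinset w ∩ s) := by
    simp only [card_neighborFinset_inter_insert G hw, sum_add_distrib, card_interedges_eq_sum]
    congr 1
    rw [sum_boole, Nat.cast_id]
    congr 1
    ext x
    simp [adj_comm, and_comm]
  rw [card_interedges_eq_sum, sum_insert hv, hsw, card_neighborFinset_inter_insert G hw]
  ring

lemma card_neighborFinset_inter_erase_self (v : V) (s : Finset V) :
    #(G.neighborFinset v ∩ s.erase v) = #(G.neighborFinset v ∩ s) := by
  rw [inter_erase, erase_eq_of_notMem (by simp)]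

lemma exists_subset_card_eq_forall_swap_le (U : Finset V) {m : ℕ} (hm : m ≤ #U) :
    ∃ X ⊆ U, #X = m ∧ ∀ v ∈ X, ∀ w ∈ U \ X,
      #(G.neighborFinset v ∩ X) + #(G.neighborFinset w ∩ (U \ X)) ≤
        #(G.neighborFinset v ∩ (U \ X)) + #(G.neighborFinset w ∩ X) := by
  obtain ⟨X, hXmem, hXmax⟩ := exists_max_image (U.powersetCard m)
    (fun X => #(G.interedges X (U \ X))) (powersetCard_nonempty.mpr hm)
  obtain ⟨hXU, hXm⟩ := mem_powersetCard.mp hXmem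
  refine ⟨X, hXU, hXm, fun v hv w hw => ?_⟩
  obtain ⟨hwU, hwX⟩ := mem_sdiff.mp hw
  have hws : w ∉ X.erase v := fun h => hwX (mem_of_mem_erase h)
  have hvt : v ∉ (U \ X).erase w := fun h => (mem_sdiff.mp (mem_of_mem_erase h)).2 hv
  have hswap_mem : insert w (X.erase v) ∈ U.powersetCard m := by
    refine mem_powersetCard.mpr ⟨insert_subset hwU ((erase_subset v X).trans hXU), ?_⟩
    rw [card_insert_of_notMem hws, card_erase_of_mem hv, hXm]
    have := card_pos.mpr ⟨v, hv⟩
    omega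
  have hcompl : U \ insert w (X.erase v) = insert v ((U \ X).erase w) := by
    ext x
    simp only [mem_sdiff, mem_insert, mem_erase]
    grind
  have hle := hXmax _ hswap_mem
  have hcut := card_interedges_insert_insert G (notMem_erase v X) (notMem_erase w (U \ X))
  rw [insert_erase hv, insert_erase hw] at hcut
  rw [hcompl, card_interedges_insert_insert G hws hvt, hcut, card_neighborFinset_inter_erase_self,
    card_neighborFinset_inter_erase_self] at hle
  simp only [G.adj_comm w v] at hle
  have hvY : #(G.neighborFinset v ∩ (U \ X).erase w) ≤ #(G.neighborFinset v ∩ (U \ X)) :=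
    card_le_card (inter_subset_inter_left (erase_subset _ _))
  have hwX : #(G.neighborFinset w ∩ X.erase v) ≤ #(G.neighborFinset w ∩ X) :=
    card_le_card (inter_subset_inter_left (erase_subset _ _))
  omega

lemma card_neighborFinset_inter_union (v : V) {s t : Finset V} (h : Disjoint s t) :
    #(G.neighborFinset v ∩ (s ∪ t)) = #(G.neighborFinset v ∩ s) + #(G.neighborFinset v ∩ t) := by
  rw [inter_union_distrib_left,
    card_union_of_disjoint (h.mono inter_subset_right inter_subset_right)]

end SimpleGraph

namespace SimpleGraph

variable {V : Type*} {G : SimpleGraph V}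

lemma Subgraph.IsMatching.exists_isPerfectMatching_induce {M : G.Subgraph} (hM : M.IsMatching) :
    ∃ M' : (G.induce M.verts).Subgraph, M'.IsPerfectMatching := by
  refine ⟨M.comap (Embedding.induce M.verts).toHom, Subgraph.isPerfectMatching_iff.mpr ?_⟩
  intro v
  obtain ⟨w, hvw, huniq⟩ := hM v.2
  exact ⟨⟨w, M.edge_vert hvw.symm⟩, ⟨M.adj_sub hvw, hvw⟩, fun u hu => Subtype.ext (huniq _ hu.2)⟩

variable [Fintype V] [DecidableEq V] [DecidableRel G.Adj]

lemma IsRegularOfDegree.card_neighborFinset_inter_le {d : ℕ} (hG : G.IsRegularOfDegree d) (v : V)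
    (s : Finset V) : #(G.neighborFinset v ∩ s) ≤ d :=
  (card_le_card inter_subset_left).trans_eq ((G.card_neighborFinset_eq_degree v).trans (hG v))

lemma exists_isPerfectMatching_induce_of_forall_card_le {U X : Finset V} (hXU : X ⊆ U)
    (hcard : #X = #(U \ X))
    (hall : ∀ A ⊆ X, #A ≤ #(A.biUnion fun a => G.neighborFinset a ∩ (U \ X))) :
    ∃ M : (G.induce (U : Set V)).Subgraph, M.IsPerfectMatching := by
  obtain ⟨f, hf_inj, hf⟩ := (all_card_le_biUnion_card_iff_exists_injective
    fun x : X => G.neighborFinset x ∩ (U \ X)).mp fun s => by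
      have := hall (s.image Subtype.val) fun x hx => by
        obtain ⟨y, -, rfl⟩ := mem_image.mp hx
        exact y.2
      rwa [image_biUnion, card_image_of_injective _ Subtype.val_injective] at this
  let g : ↥(X : Set V) → ↥((U \ X : Finset V) : Set V) := fun x => ⟨f x, (mem_inter.mp (hf x)).2⟩
  have hg : g.Bijective := (Fintype.bijective_iff_injective_and_card g).mpr
    ⟨fun x y h => hf_inj (congrArg Subtype.val h),
      by simp only [coe_sort_coe, Fintype.card_coe, hcard]⟩
  obtain ⟨M, hMverts, hM⟩ := Subgraph.IsMatching.exists_of_disjoint_sets_of_equiv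
    (disjoint_coe.mpr disjoint_sdiff) (Equiv.ofBijective g hg)
    fun x => (G.mem_neighborFinset _ _).mp (mem_inter.mp (hf x)).1
  rw [← coe_union, union_sdiff_of_subset hXU] at hMverts
  exact hMverts ▸ hM.exists_isPerfectMatching_induce

end SimpleGraph

namespace IsNDLGraph

open SimpleGraph EuclideanSpace

variable {n d : ℕ} {lam : ℝ} {G : SimpleGraph (Fin n)} [DecidableRel G.Adj]

theorem abs_card_interedges_sub_le (hG : IsNDLGraph G d lam) (hlam0 : 0 ≤ lam)
    (hlam : lam < d) (s t : Finset (Fin n)) :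
    |(#(G.interedges s t) : ℝ) - d * #s * #t / n| ≤ lam * √((#s : ℝ) * #t) := by
  obtain ⟨hreg, i₀, hei⟩ := hG
  have : Nonempty (Fin n) := ⟨i₀⟩
  set hA := adjMatrix_isHermitian G
  have hone : (toLp 2 1 : EuclideanSpace ℝ (Fin n)) ≠ 0 := by
    intro h
    simpa using congr_arg (fun x : EuclideanSpace ℝ (Fin n) => x i₀) h
  have horth (i : Fin n) (hi : i ≠ i₀) : ⟪hA.eigenvectorBasis i, toLp 2 1⟫ = 0 :=
    hA.inner_eigenvectorBasis_eq_zero (toEuclideanLin_adjMatrix_one G hreg)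
      (((le_abs_self _).trans (hei i hi)).trans_lt hlam).ne
  have key := hA.abs_inner_toEuclideanLin_le hlam0 hei
    (hA.eigenvectorBasis.inner_eq_zero_of_inner_eq_zero hone horth
      (inner_one_centeredIndicator s)) (centeredIndicator t)
  rw [inner_centeredIndicator_toEuclideanLin_adjMatrix G hreg, Fintype.card_fin] at key
  calc _ ≤ lam * (‖centeredIndicator s‖ * ‖centeredIndicator t‖) := key
    _ ≤ lam * (√(#s : ℝ) * √(#t : ℝ)) := by
        gcongr
        exacts [norm_centeredIndicator_le s, norm_centeredIndicator_le t]
    _ = lam * √((#s : ℝ) * #t) := by rw [Real.sqrt_mul (Nat.cast_nonneg _)]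

lemma lam_nonneg (hG : IsNDLGraph G d lam) (hn : 1 < n) : 0 ≤ lam := by
  obtain ⟨-, i₀, hei⟩ := hG
  obtain ⟨j, hj⟩ := Fintype.exists_ne_of_one_lt_card (by simpa using hn) i₀
  exact (abs_nonneg _).trans (hei j hj)

lemma sub_mul_le_mul_card_of_le_card_inter (hG : IsNDLGraph G d lam) (hlam0 : 0 ≤ lam)
    (hlam : lam < d) {s t : Finset (Fin n)} (hs : s.Nonempty) (hts : #t ≤ #s) {δ : ℝ}
    (hδ : ∀ v ∈ s, δ ≤ #(G.neighborFinset v ∩ t)) : (δ - lam) * n ≤ d * #t := by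
  have hsR : (0 : ℝ) < #s := by exact_mod_cast hs.card_pos
  have hnR : (0 : ℝ) < n := by exact_mod_cast Fin.pos hs.choose
  have hlow := G.mul_card_le_card_interedges hδ
  have hup := (abs_le.mp (hG.abs_card_interedges_sub_le hlam0 hlam s t)).2
  have hsqrt : √((#s : ℝ) * #t) ≤ #s :=
    Real.sqrt_le_iff.mpr ⟨hsR.le, by nlinarith [show (#t : ℝ) ≤ #s by exact_mod_cast hts]⟩
  have : δ * #s ≤ (d * #t / n + lam) * #s :=
    calc δ * #s ≤ d * #s * #t / n + lam * √((#s : ℝ) * #t) := by linarith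
      _ ≤ (d * #t / n + lam) * #s := by
        rw [add_mul, mul_right_comm, mul_div_right_comm]
        gcongr
  rw [← le_div_iff₀ hnR]
  linarith [le_of_mul_le_mul_right this hsR]

lemma mul_card_le_of_card_inter_le (hG : IsNDLGraph G d lam) (hlam0 : 0 ≤ lam) (hlam : lam < d)
    {s : Finset (Fin n)} (hs : s.Nonempty) {δ : ℝ} (hδ : ∀ v ∈ s, #(G.neighborFinset v ∩ s) ≤ δ) :
    d * #s ≤ (δ + lam) * n := by
  have hsR : (0 : ℝ) < #s := by exact_mod_cast hs.card_pos
  have hnR : (0 : ℝ) < n := by exact_mod_cast Fin.pos hs.choose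
  have hup := G.card_interedges_le_mul_card hδ
  have hlow := (abs_le.mp (hG.abs_card_interedges_sub_le hlam0 hlam s s)).1
  rw [Real.sqrt_mul_self hsR.le] at hlow
  have : d * #s / n * #s ≤ (δ + lam) * #s := by
    rw [div_mul_eq_mul_div, mul_right_comm]
    linarith
  rw [← div_le_iff₀ hnR]
  exact le_of_mul_le_mul_right this hsR

lemma mul_sqrt_le_of_interedges_eq_empty (hG : IsNDLGraph G d lam) (hlam0 : 0 ≤ lam)
    (hlam : lam < d) {s t : Finset (Fin n)} (h : G.interedges s t = ∅) :
    d * √((#s : ℝ) * #t) ≤ lam * n := by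
  rcases Nat.eq_zero_or_pos n with rfl | hn
  · simp [eq_empty_of_isEmpty s]
  have hmix := (abs_le.mp (hG.abs_card_interedges_sub_le hlam0 hlam s t)).1
  rw [h, card_empty, Nat.cast_zero, zero_sub, neg_le_neg_iff, div_le_iff₀ (by positivity)] at hmix
  have hsq := Real.mul_self_sqrt (by positivity : (0 : ℝ) ≤ #s * #t)
  have hr0 := Real.sqrt_nonneg ((#s : ℝ) * #t)
  generalize √((#s : ℝ) * #t) = r at hmix hsq hr0 ⊢
  rcases hr0.eq_or_lt with rfl | hr
  · rw [mul_zero]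
    positivity
  refine le_of_mul_le_mul_left ?_ hr
  nlinarith

lemma div_five_le_card_inter_of_swap_le (hG : IsNDLGraph G d lam) (hlam0 : 0 ≤ lam)
    (hlam : lam < d / 50) {X Y : Finset (Fin n)} (hXY : Disjoint X Y) (hY : 11 / 25 * (n : ℝ) < #Y)
    (hdeg : ∀ v ∈ X ∪ Y, 9 * (d : ℝ) / 10 ≤ #(G.neighborFinset v ∩ (X ∪ Y)))
    (hswap : ∀ v ∈ X, ∀ w ∈ Y, #(G.neighborFinset v ∩ X) + #(G.neighborFinset w ∩ Y) ≤
      #(G.neighborFinset v ∩ Y) + #(G.neighborFinset w ∩ X)) :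
    ∀ v ∈ X, (d : ℝ) / 5 ≤ #(G.neighborFinset v ∩ Y) := by
  intro v hv
  by_contra! hvY
  have hvX : 7 * (d : ℝ) / 10 < #(G.neighborFinset v ∩ X) := by
    have := hdeg v (mem_union_left Y hv)
    rw [G.card_neighborFinset_inter_union v hXY, Nat.cast_add] at this
    linarith
  have hsparse (w : Fin n) (hw : w ∈ Y) : (#(G.neighborFinset w ∩ Y) : ℝ) ≤ d / 4 := by
    have hswap_w : (#(G.neighborFinset v ∩ X) + #(G.neighborFinset w ∩ Y) : ℝ) ≤
        #(G.neighborFinset v ∩ Y) + #(G.neighborFinset w ∩ X) := by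
      exact_mod_cast hswap v hv w hw
    have hdeg_w : (#(G.neighborFinset w ∩ X) + #(G.neighborFinset w ∩ Y) : ℝ) ≤ d := by
      rw [← Nat.cast_add, ← G.card_neighborFinset_inter_union w hXY]
      exact_mod_cast hG.1.card_neighborFinset_inter_le w _
    linarith
  have hYne : Y.Nonempty :=
    card_pos.mp (by exact_mod_cast (by positivity : (0 : ℝ) ≤ 11 / 25 * n).trans_lt hY)
  have := hG.mul_card_le_of_card_inter_le hlam0 (by linarith) hYne hsparse
  nlinarith

lemma nine_div_fifty_mul_lt_card_biUnion (hG : IsNDLGraph G d lam) (hlam0 : 0 ≤ lam)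
    (hlam : lam < d / 50) {A Q : Finset (Fin n)}
    (hdeg : ∀ a ∈ A, (d : ℝ) / 5 ≤ #(G.neighborFinset a ∩ Q))
    (hA : #(A.biUnion fun a => G.neighborFinset a ∩ Q) < #A) :
    9 / 50 * (n : ℝ) < #(A.biUnion fun a => G.neighborFinset a ∩ Q) := by
  set C := A.biUnion fun a => G.neighborFinset a ∩ Q
  have hAne : A.Nonempty := card_pos.mp (by omega)
  have hdegC (a : Fin n) (ha : a ∈ A) : (d : ℝ) / 5 ≤ #(G.neighborFinset a ∩ C) := by
    have hsub : G.neighborFinset a ∩ Q ⊆ G.neighborFinset a ∩ C := fun x hx =>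
      mem_inter.mpr ⟨(mem_inter.mp hx).1, mem_biUnion.mpr ⟨a, ha, hx⟩⟩
    exact (hdeg a ha).trans (by exact_mod_cast card_le_card hsub)
  have := hG.sub_mul_le_mul_card_of_le_card_inter hlam0 (by linarith) hAne hA.le hdegC
  have hnR : (0 : ℝ) < n := by exact_mod_cast Fin.pos hAne.choose
  nlinarith

lemma card_le_card_biUnion (hG : IsNDLGraph G d lam) (hlam0 : 0 ≤ lam) (hlam : lam < d / 50)
    {X Y : Finset (Fin n)} (hcard : #X = #Y)
    (hX : ∀ v ∈ X, (d : ℝ) / 5 ≤ #(G.neighborFinset v ∩ Y))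
    (hY : ∀ w ∈ Y, (d : ℝ) / 5 ≤ #(G.neighborFinset w ∩ X)) {A : Finset (Fin n)} (hAX : A ⊆ X) :
    #A ≤ #(A.biUnion fun a => G.neighborFinset a ∩ Y) := by
  set C := A.biUnion fun a => G.neighborFinset a ∩ Y
  by_contra! hC
  have hCY : C ⊆ Y := biUnion_subset.mpr fun _ _ => inter_subset_right
  set B := Y \ C
  have hAB : G.interedges A B = ∅ := by
    refine eq_empty_of_forall_notMem fun e he => ?_
    obtain ⟨ha, hb, hadj⟩ := G.mem_interedges_iff.mp he
    obtain ⟨hbY, hbC⟩ := mem_sdiff.mp hb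
    exact hbC (mem_biUnion.mpr ⟨e.1, ha, mem_inter.mpr ⟨(G.mem_neighborFinset _ _).mpr hadj, hbY⟩⟩)
  set C' := B.biUnion fun b => G.neighborFinset b ∩ X
  have hC'X : C' ⊆ X \ A := biUnion_subset.mpr fun b hb x hx => by
    obtain ⟨hbx, hxX⟩ := mem_inter.mp hx
    refine mem_sdiff.mpr ⟨hxX, fun hxA => ?_⟩
    have : (x, b) ∈ G.interedges A B :=
      G.mk_mem_interedges_iff.mpr ⟨hxA, hb, ((G.mem_neighborFinset _ _).mp hbx).symm⟩
    simp [hAB] at this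
  have hC' : #C' < #B := by
    have := card_le_card hC'X
    rw [card_sdiff_of_subset hAX] at this
    rw [card_sdiff_of_subset hCY]
    have := card_le_card hAX
    omega
  have hC_big := hG.nine_div_fifty_mul_lt_card_biUnion hlam0 hlam (fun a ha => hX a (hAX ha)) hC
  have hC'_big := hG.nine_div_fifty_mul_lt_card_biUnion hlam0 hlam
    (fun b hb => hY b (sdiff_subset hb)) hC'
  have hsqrt : 9 / 50 * (n : ℝ) < √((#A : ℝ) * #B) := by
    have hA : 9 / 50 * (n : ℝ) < #A := hC_big.trans (by exact_mod_cast hC)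
    have hB : 9 / 50 * (n : ℝ) < #B := hC'_big.trans (by exact_mod_cast hC')
    rw [Real.lt_sqrt (by positivity), sq]
    exact mul_lt_mul'' hA hB (by positivity) (by positivity)
  have := hG.mul_sqrt_le_of_interedges_eq_empty hlam0 (by linarith) hAB
  nlinarith

end IsNDLGraph

/-- If `G` is an `(n, d, λ)`-graph with `λ < d/50` and `U` is an even-sized vertex subset
such that the induced subgraph `G[U]` has minimum degree at least `9d/10`, then `G[U]`
contains a perfect matching. -/
theorem induced_perfect_matching {n d : ℕ} (lam : ℝ) (G : SimpleGraph (Fin n))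
    [DecidableRel G.Adj] (hG : IsNDLGraph G d lam) (hlam : lam < (d : ℝ) / 50)
    (U : Finset (Fin n)) (hUeven : Even U.card)
    (hU : ∀ v ∈ U, 9 * (d : ℝ) / 10 ≤ ((G.neighborFinset v ∩ U).card : ℝ)) :
    ∃ M : (G.induce (↑U : Set (Fin n))).Subgraph, M.IsPerfectMatching := by
  rcases U.eq_empty_or_nonempty with rfl | hUne
  · exact exists_isPerfectMatching_induce_of_forall_card_le (empty_subset _) rfl
      fun A hA => by simp [subset_empty.mp hA]
  obtain ⟨m, hm⟩ := hUeven
  have hlam0 : 0 ≤ lam := hG.lam_nonneg <| by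
    have := card_le_univ U
    rw [Fintype.card_fin] at this
    have := hUne.card_pos
    omega
  have hUn : 22 / 25 * (n : ℝ) < #U := by
    have := hG.sub_mul_le_mul_card_of_le_card_inter hlam0 (by linarith) hUne le_rfl hU
    have hnR : (0 : ℝ) < n := by exact_mod_cast Fin.pos hUne.choose
    nlinarith
  obtain ⟨X, hXU, hXm, hswap⟩ := G.exists_subset_card_eq_forall_swap_le U (m := m) (by omega)
  have hYm : #(U \ X) = m := by rw [card_sdiff_of_subset hXU]; omega
  have hcard : #X = #(U \ X) := hXm.trans hYm.symm
  have hmn : 11 / 25 * (n : ℝ) < m := by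
    rw [hm, Nat.cast_add] at hUn
    linarith
  rw [← union_sdiff_of_subset hXU] at hU
  have hX := hG.div_five_le_card_inter_of_swap_le hlam0 hlam disjoint_sdiff (by rwa [hYm]) hU hswap
  have hY := hG.div_five_le_card_inter_of_swap_le hlam0 hlam disjoint_sdiff.symm (by rwa [hXm])
    (by rwa [union_comm]) fun w hw v hv => by have := hswap v hv w hw; omega
  exact exists_isPerfectMatching_induce_of_forall_card_le hXU hcard
    fun A hA => hG.card_le_card_biUnion hlam0 hlam hcard hX hY hA
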